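/- If the word problem instance holds, i.e. the monoid presentation ⟨G | u_i = v_i (i < m)⟩ proves u = v, then the theory T is not rigid: the term t(x1,x2) = m(uα(x1), x2) is linear-regular and T proves t(x1,x2) = t(x2,x1), where the transposition swapping x1 and x2 is not the identity. -/

import Mathlib

/-- Terms of the theory `T`: unary symbols `g x` for each letter `x` of the alphabet `Fin N`,
an extra unary symbol `al` (written α), and a binary symbol `m`, in context `x_1, ..., x_n`. -/
inductive TmT (N : ℕ) : ℕ → Type
  | var {n} : Fin n → TmT N n
  | g {n} : Fin N → TmT N n → TmT N n
  | al {n} : TmT N n → TmT N n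
  | m {n} : TmT N n → TmT N n → TmT N n

/-- A word `w` over the alphabet applied to a term as a composite of unary symbols. -/
def wApp {N n : ℕ} (w : List (Fin N)) (t : TmT N n) : TmT N n :=
  w.foldr (fun x s => TmT.g x s) t

/-- Equational provability in the theory `T` with axioms `u_i(x1) = v_i(x1)` (for `i : Fin M`,
where `u_i = ur i`, `v_i = vr i`) and `m(uα(x1), x2) = m(vα(x2), x1)`, closed under
all substitution instances and congruence. -/
inductive ProvT {N : ℕ} (M : ℕ) (ur vr : Fin M → List (Fin N)) (u v : List (Fin N)) :
    {n : ℕ} → TmT N n → TmT N n → Prop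
  | refl {n} (t : TmT N n) : ProvT M ur vr u v t t
  | symm {n} {s t : TmT N n} : ProvT M ur vr u v s t → ProvT M ur vr u v t s
  | trans {n} {s t w : TmT N n} :
      ProvT M ur vr u v s t → ProvT M ur vr u v t w → ProvT M ur vr u v s w
  | congg {n} (x : Fin N) {s t : TmT N n} :
      ProvT M ur vr u v s t → ProvT M ur vr u v (.g x s) (.g x t)
  | congal {n} {s t : TmT N n} : ProvT M ur vr u v s t → ProvT M ur vr u v (.al s) (.al t)
  | congm {n} {a a' b b' : TmT N n} : ProvT M ur vr u v a a' → ProvT M ur vr u v b b' →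
      ProvT M ur vr u v (.m a b) (.m a' b')
  | axu {n} (i : Fin M) (t : TmT N n) : ProvT M ur vr u v (wApp (ur i) t) (wApp (vr i) t)
  | axm {n} (t₁ t₂ : TmT N n) :
      ProvT M ur vr u v (.m (wApp u (.al t₁)) t₂) (.m (wApp v (.al t₂)) t₁)

/-- Provability of word equations from the monoid presentation
`⟨ Fin N | ur i = vr i (i : Fin M) ⟩`: the congruence on the free monoid of words
over `Fin N` generated by the relations. -/
inductive MonProv {N M : ℕ} (ur vr : Fin M → List (Fin N)) :
    List (Fin N) → List (Fin N) → Prop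
  | of (i : Fin M) : MonProv ur vr (ur i) (vr i)
  | refl (w : List (Fin N)) : MonProv ur vr w w
  | symm {a b} : MonProv ur vr a b → MonProv ur vr b a
  | trans {a b c} : MonProv ur vr a b → MonProv ur vr b c → MonProv ur vr a c
  | mul {a b c d} : MonProv ur vr a b → MonProv ur vr c d → MonProv ur vr (a ++ c) (b ++ d)

/-- The left-to-right list of variable occurrences of a term of `T`. -/
def varListT {N n : ℕ} : TmT N n → List (Fin n)
  | .var i => [i]
  | .g _ t => varListT t
  | .al t => varListT t
  | .m a b => varListT a ++ varListT b

/-- A term of `T` in context `x_1, ..., x_n` is linear-regular if every variable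
occurs exactly once. -/
def LinRegT {N n : ℕ} (t : TmT N n) : Prop := ∀ i : Fin n, (varListT t).count i = 1

/-- Substitution of variables along a map of variables (`t(x_{σ(1)},...,x_{σ(n)})`). -/
def renameT {N n : ℕ} (σ : Fin n → Fin n) : TmT N n → TmT N n
  | .var i => .var (σ i)
  | .g x t => .g x (renameT σ t)
  | .al t => .al (renameT σ t)
  | .m a b => .m (renameT σ a) (renameT σ b)

/-- The theory `T` is rigid: no linear-regular term is provably equal to a nontrivial
permutation of its variables. -/
def RigidT {N : ℕ} (M : ℕ) (ur vr : Fin M → List (Fin N)) (u v : List (Fin N)) : Prop :=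
  ∀ (n : ℕ) (t : TmT N n), LinRegT t → ∀ σ : Equiv.Perm (Fin n),
    ProvT M ur vr u v t (renameT σ t) → σ = 1

/-!
The axiom `m(uα(x₁), x₂) = m(vα(x₂), x₁)` already swaps the two variables, except that the
word in front of `α` changes from `u` to `v`. A derivation of `u = v` in the monoid presentation
replays in `T` under `α(x₂)`, one relation `u_i = v_i` at a time, turning `vα(x₂)` back into
`uα(x₂)`. So `m(uα(x₁), x₂)` is provably invariant under the transposition of its two variables.
-/

theorem wApp_append {N n : ℕ} (a b : List (Fin N)) (t : TmT N n) :
    wApp (a ++ b) t = wApp a (wApp b t) :=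
  List.foldr_append

theorem varListT_wApp {N n : ℕ} (w : List (Fin N)) (t : TmT N n) :
    varListT (wApp w t) = varListT t := by
  induction w with
  | nil => rfl
  | cons _ _ ih => exact ih

theorem renameT_wApp {N n : ℕ} (σ : Fin n → Fin n) (w : List (Fin N)) (t : TmT N n) :
    renameT σ (wApp w t) = wApp w (renameT σ t) := by
  induction w with
  | nil => rfl
  | cons x _ ih => exact congrArg (TmT.g x) ih

namespace ProvT

variable {N M n : ℕ} {ur vr : Fin M → List (Fin N)} {u v : List (Fin N)}

theorem wApp_congr (w : List (Fin N)) {s t : TmT N n} (h : ProvT M ur vr u v s t) :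
    ProvT M ur vr u v (wApp w s) (wApp w t) := by
  induction w with
  | nil => exact h
  | cons x _ ih => exact congg x ih

theorem wApp_of_monProv {a b : List (Fin N)} (h : MonProv ur vr a b) (t : TmT N n) :
    ProvT M ur vr u v (wApp a t) (wApp b t) := by
  induction h generalizing t with
  | of i => exact axu i t
  | refl _ => exact refl _
  | symm _ ih => exact (ih t).symm
  | trans _ _ ih₁ ih₂ => exact (ih₁ t).trans (ih₂ t)
  | @mul a _ _ d _ _ ih₁ ih₂ =>
    rw [wApp_append, wApp_append]
    exact (wApp_congr a (ih₂ t)).trans (ih₁ (wApp d t))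

theorem m_swap_of_monProv (h : MonProv ur vr u v) (s t : TmT N n) :
    ProvT M ur vr u v (.m (wApp u (.al s)) t) (.m (wApp u (.al t)) s) :=
  (axm s t).trans (congm (wApp_of_monProv h.symm (.al t)) (refl s))

end ProvT

theorem linRegT_m_wApp_al {N : ℕ} (w : List (Fin N)) :
    LinRegT (TmT.m (wApp w (.al (TmT.var (0 : Fin 2)))) (TmT.var 1)) := by
  intro i
  simp only [varListT, varListT_wApp]
  fin_cases i <;> decide

theorem not_rigidT_of_provT_renameT {N M n : ℕ} {ur vr : Fin M → List (Fin N)}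
    {u v : List (Fin N)} {t : TmT N n} (ht : LinRegT t) {σ : Equiv.Perm (Fin n)} (hσ : σ ≠ 1)
    (h : ProvT M ur vr u v t (renameT σ t)) : ¬ RigidT M ur vr u v :=
  fun hrigid => hσ (hrigid n t ht σ h)

/-- If the word problem instance holds, i.e. the monoid presentation
proves `u = v`, then `T` is not rigid: the term `t(x1,x2) = m(uα(x1),x2)` is
linear-regular and `T ⊢ t(x1,x2) = t(x2,x1)`, where the transposition swapping
`x1` and `x2` is not the identity. -/
theorem not_rigid_of_word_problem {N M : ℕ} (ur vr : Fin M → List (Fin N))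
    (u v : List (Fin N)) (h : MonProv ur vr u v) :
    LinRegT (TmT.m (wApp u (.al (TmT.var (0 : Fin 2)))) (TmT.var 1)) ∧
    ProvT M ur vr u v (TmT.m (wApp u (.al (TmT.var (0 : Fin 2)))) (TmT.var 1))
      (renameT (Equiv.swap (0 : Fin 2) 1)
        (TmT.m (wApp u (.al (TmT.var (0 : Fin 2)))) (TmT.var 1))) ∧
    Equiv.swap (0 : Fin 2) 1 ≠ 1 ∧
    ¬ RigidT M ur vr u v := by
  have hlin := linRegT_m_wApp_al u
  have hswap : Equiv.swap (0 : Fin 2) 1 ≠ 1 := by decide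
  have hprov : ProvT M ur vr u v (TmT.m (wApp u (.al (TmT.var (0 : Fin 2)))) (TmT.var 1))
      (renameT (Equiv.swap (0 : Fin 2) 1)
        (TmT.m (wApp u (.al (TmT.var (0 : Fin 2)))) (TmT.var 1))) := by
    simpa [renameT, renameT_wApp] using ProvT.m_swap_of_monProv h (.var 0) (.var 1)
  exact ⟨hlin, hprov, hswap, not_rigidT_of_provT_renameT hlin hswap hprov⟩
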